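/- Let e ∈ Fin 7 → ℝ be a unit vector and let N := {g ∈ Spin(7) : g·ι(e)·g⁻¹ = ι(e) or g·ι(e)·g⁻¹ = -ι(e)} (a Spin(1,6)-subgroup of Spin(7)). Let r, r' : Γ →* Spin(7) be homomorphisms whose images are contained in N. Then the following are equivalent: (1) there exists u ∈ N with u·r(γ)·u⁻¹ = r'(γ) for all γ ∈ Γ; (2) there exists g ∈ Spin(7) with g·r(γ)·g⁻¹ = r'(γ) for all γ ∈ Γ, and moreover r(γ)·ι(e)·r(γ)⁻¹ = r'(γ)·ι(e)·r'(γ)⁻¹ for every γ ∈ Γ (i.e. the sign characters κ∘r and κ∘r' of Γ coincide, where κ(g) = ±1 is determined by g·ι(e)·g⁻¹ = κ(g) • ι(e) for g ∈ N). -/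

import Mathlib

/-- The standard positive-definite quadratic form `v ↦ ∑ i, (v i)^2` on `Fin 7 → ℝ`. -/
noncomputable def Q7 : QuadraticForm ℝ (Fin 7 → ℝ) :=
  QuadraticMap.weightedSumSquares ℝ (fun _ : Fin 7 => (1 : ℝ))

/-- `Spin(7)`, the spin group of the standard quadratic form on `Fin 7 → ℝ`. -/
abbrev Spin7 : Type :=
  ↥(spinGroup Q7)

/-- Membership in the `Spin(1,6)`-subgroup `N` attached to the unit vector `e`:
`g ∈ N` iff `g·ι(e)·g⁻¹ = ±ι(e)`. -/
def memN (e : Fin 7 → ℝ) (g : Spin7) : Prop :=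
  ((g : Spin7) : CliffordAlgebra Q7) * CliffordAlgebra.ι Q7 e *
      ((g⁻¹ : Spin7) : CliffordAlgebra Q7) = CliffordAlgebra.ι Q7 e ∨
  ((g : Spin7) : CliffordAlgebra Q7) * CliffordAlgebra.ι Q7 e *
      ((g⁻¹ : Spin7) : CliffordAlgebra Q7) = -(CliffordAlgebra.ι Q7 e)

/-!
Write `f` for the vector with `ι(f) = g·ι(e)·g⁻¹` and let `m` be the unit vector along `e + f`.
Then `w = ι(m)·ι(f) ∈ Spin(7)` conjugates `ι(f)` to `ι(m)·ι(f)·ι(m) = ι(e)`, so `w·g ∈ N`.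
If `r'(γ) = g·r(γ)·g⁻¹` multiplies `ι(e)` by the sign `κ(r'(γ))`, it multiplies `ι(f)` by
`κ(r(γ))`; when these signs agree it scales `ι(m)` and `ι(f)` by the same sign, hence commutes
with `w`, and `w·g` conjugates `r` to `r'`. (When `f = -e`, `g` itself already lies in `N`.)
Conversely, conjugating by an element of `N` cannot change the sign character, because scalars
are central.
-/

namespace CliffordAlgebra

section CommRing

variable {R M : Type*} [CommRing R] [AddCommGroup M] [Module R M] {Q : QuadraticForm R M}

def spinConj : spinGroup Q →* CliffordAlgebra Q ≃ₐ[R] CliffordAlgebra Q :=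
  (MulSemiringAction.toAlgAut (ConjAct (CliffordAlgebra Q)ˣ) R (CliffordAlgebra Q)).comp
    (ConjAct.toConjAct.toMonoidHom.comp spinGroup.toUnits)

theorem spinConj_apply (g : spinGroup Q) (x : CliffordAlgebra Q) :
    spinConj g x = g * x * ↑g⁻¹ :=
  rfl

theorem spinConj_eq_self_iff_commute {g h : spinGroup Q} : spinConj g h = h ↔ Commute g h := by
  change ((g * h * g⁻¹ : spinGroup Q) : CliffordAlgebra Q) = h ↔ _
  rw [SetLike.coe_eq_coe, mul_inv_eq_iff_eq_mul]
  rfl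

theorem spinConj_inv_apply_of_eq_smul {g : spinGroup Q} {x : CliffordAlgebra Q} {s : R}
    (hs : s * s = 1) (h : spinConj g x = s • x) : spinConj g⁻¹ x = s • x := by
  have hx : x = s • spinConj g⁻¹ x := by
    rw [← map_smul, ← h, ← AlgEquiv.mul_apply, ← map_mul, inv_mul_cancel, map_one,
      AlgEquiv.one_apply]
  calc spinConj g⁻¹ x = (s * s) • spinConj g⁻¹ x := by rw [hs, one_smul]
    _ = s • x := by rw [mul_smul, ← hx]

theorem spinConj_conj_apply_of_eq_smul {u r : spinGroup Q} {x : CliffordAlgebra Q} {s t : R}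
    (hs : s * s = 1) (hu : spinConj u x = s • x) (hr : spinConj r x = t • x) :
    spinConj (u * r * u⁻¹) x = t • x := by
  rw [map_mul, map_mul, AlgEquiv.mul_apply, AlgEquiv.mul_apply,
    spinConj_inv_apply_of_eq_smul hs hu, map_smul, map_smul, hr, map_smul, hu, smul_smul,
    smul_smul, mul_right_comm, hs, one_mul]

theorem ι_mul_ι_self_eq_one {a : M} (ha : Q a = 1) : ι Q a * ι Q a = 1 := by
  rw [ι_sq_scalar, ha, map_one]

theorem ι_mul_ι_mem_spinGroup {a b : M} (ha : Q a = 1) (hb : Q b = 1) :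
    ι Q a * ι Q b ∈ spinGroup Q := by
  have hlip : ∀ {v : M}, Q v = 1 →
      ι Q v ∈ (lipschitzGroup Q).toSubmonoid.map (Units.coeHom (CliffordAlgebra Q)) :=
    fun hv => ⟨⟨ι Q _, ι Q _, ι_mul_ι_self_eq_one hv, ι_mul_ι_self_eq_one hv⟩,
      Subgroup.subset_closure ⟨_, rfl⟩, rfl⟩
  have hstar : star (ι Q a * ι Q b) = ι Q b * ι Q a := by
    rw [star_mul, star_ι, star_ι, neg_mul_neg]
  refine spinGroup.mem_iff.mpr ⟨pinGroup.mem_iff.mpr ⟨mul_mem (hlip ha) (hlip hb),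
    Unitary.mem_iff.mpr ⟨?_, ?_⟩⟩, ι_mul_ι_mem_evenOdd_zero Q a b⟩ <;> rw [hstar]
  · rw [mul_assoc, ← mul_assoc (ι Q a), ι_mul_ι_self_eq_one ha, one_mul, ι_mul_ι_self_eq_one hb]
  · rw [mul_assoc, ← mul_assoc (ι Q b), ι_mul_ι_self_eq_one hb, one_mul, ι_mul_ι_self_eq_one ha]

theorem spinConj_ι_mul_ι_apply_ι {m f : M} (hm : Q m = 1) (hf : Q f = 1) :
    spinConj ⟨ι Q m * ι Q f, ι_mul_ι_mem_spinGroup hm hf⟩ (ι Q f) =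
      ι Q (QuadraticMap.polar Q m f • m - f) := by
  change ι Q m * ι Q f * ι Q f * star (ι Q m * ι Q f) = _
  rw [star_mul, star_ι, star_ι, neg_mul_neg, mul_assoc (ι Q m), ι_mul_ι_self_eq_one hf, mul_one,
    ← mul_assoc, ι_mul_ι_mul_ι, hm, one_smul]

theorem commute_of_spinConj_ι_eq_smul {a b : M} (ha : Q a = 1) (hb : Q b = 1)
    {h : spinGroup Q} {t : R} (ht : t * t = 1) (hta : spinConj h (ι Q a) = t • ι Q a)
    (htb : spinConj h (ι Q b) = t • ι Q b) :
    Commute h ⟨ι Q a * ι Q b, ι_mul_ι_mem_spinGroup ha hb⟩ := by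
  rw [← spinConj_eq_self_iff_commute, map_mul, hta, htb, smul_mul_smul_comm, ht, one_smul]

theorem polar_smul_add_smul_smul_add_sub_eq {e f : M} (he : Q e = 1) (hf : Q f = 1) {a : R}
    (ha : a * a * Q (e + f) = 1) :
    QuadraticMap.polar Q (a • (e + f)) f • a • (e + f) - f = e := by
  have hpolar : QuadraticMap.polar Q (a • (e + f)) f = a * Q (e + f) := by
    rw [QuadraticMap.polar_smul_left, QuadraticMap.polar_add_left, QuadraticMap.polar_self,
      QuadraticMap.polar, he, hf, smul_eq_mul, two_nsmul]
    ring
  rw [hpolar, smul_smul, show a * Q (e + f) * a = 1 by linear_combination ha, one_smul,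
    add_sub_cancel_right]

end CommRing

theorem exists_spinConj_ι_eq_ι {K M : Type*} [Field K] [Invertible (2 : K)] [AddCommGroup M]
    [Module K M] {Q : QuadraticForm K M} (g : spinGroup Q) (v : M) :
    ∃ f, Q f = Q v ∧ spinConj g (ι Q v) = ι Q f := by
  obtain ⟨f, hf⟩ := spinGroup.conjAct_smul_ι_mem_range_ι (x := spinGroup.toUnits g) g.2 v
  replace hf : spinConj g (ι Q v) = ι Q f := hf.symm
  refine ⟨f, (algebraMap K (CliffordAlgebra Q)).injective ?_, hf⟩
  rw [← ι_sq_scalar, ← hf, ← map_mul, ι_sq_scalar, AlgEquiv.commutes]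

section Real

variable {M : Type*} [AddCommGroup M] [Module ℝ M] {Q : QuadraticForm ℝ M}

theorem exists_mul_self_mul_eq_one (hQ : Q.PosDef) {v : M} (hv : v ≠ 0) :
    ∃ a : ℝ, a * a * Q v = 1 := by
  have hpos := hQ v hv
  refine ⟨(√(Q v))⁻¹, ?_⟩
  rw [← mul_inv, Real.mul_self_sqrt hpos.le, inv_mul_cancel₀ hpos.ne']

theorem exists_commute_mul_spinConj_ι_eq_or_eq_neg (hQ : Q.PosDef) {e : M} (he : Q e = 1)
    (g : spinGroup Q) :
    ∃ w : spinGroup Q,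
      (spinConj (w * g) (ι Q e) = ι Q e ∨ spinConj (w * g) (ι Q e) = -ι Q e) ∧
      ∀ (h : spinGroup Q) (t : ℝ), t * t = 1 → spinConj h (ι Q e) = t • ι Q e →
        spinConj h (spinConj g (ι Q e)) = t • spinConj g (ι Q e) → Commute h w := by
  obtain ⟨f, hQf, hf⟩ := exists_spinConj_ι_eq_ι g e
  rw [he] at hQf
  rw [hf]
  by_cases hef : e + f = 0
  · refine ⟨1, Or.inr ?_, fun h _ _ _ _ => Commute.one_right h⟩
    rw [one_mul, hf, eq_neg_of_add_eq_zero_right hef, map_neg]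
  obtain ⟨a, ha⟩ := exists_mul_self_mul_eq_one hQ hef
  have hm : Q (a • (e + f)) = 1 := by rw [QuadraticMap.map_smul, smul_eq_mul, ha]
  refine ⟨⟨_, ι_mul_ι_mem_spinGroup hm hQf⟩, Or.inl ?_, fun h t ht hte htf => ?_⟩
  · rw [map_mul, AlgEquiv.mul_apply, hf, spinConj_ι_mul_ι_apply_ι hm hQf,
      polar_smul_add_smul_smul_add_sub_eq he hQf ha]
  · refine commute_of_spinConj_ι_eq_smul hm hQf ht ?_ htf
    rw [map_smul, map_add, map_smul, map_add, hte, htf, ← smul_add, smul_comm a]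

end Real

end CliffordAlgebra

open CliffordAlgebra

theorem Q7_apply (v : Fin 7 → ℝ) : Q7 v = ∑ i, v i ^ 2 := by
  simp [Q7, QuadraticMap.weightedSumSquares_apply, sq]

theorem Q7_posDef : Q7.PosDef := by
  intro v hv
  rw [Q7_apply]
  obtain ⟨i, hi⟩ := Function.ne_iff.mp hv
  exact Finset.sum_pos' (fun j _ => sq_nonneg (v j)) ⟨i, Finset.mem_univ i, sq_pos_of_ne_zero hi⟩

theorem exists_sign_of_memN {e : Fin 7 → ℝ} {g : Spin7} (h : memN e g) :
    ∃ t : ℝ, t * t = 1 ∧ spinConj g (ι Q7 e) = t • ι Q7 e := by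
  rcases h with h | h
  · exact ⟨1, one_mul 1, by rw [one_smul]; exact h⟩
  · exact ⟨-1, by norm_num, by rw [neg_one_smul]; exact h⟩

theorem conjugate_in_N_iff_general
    {Γ : Type*} [Group Γ] (e : Fin 7 → ℝ) (he : ∑ i, (e i) ^ 2 = 1)
    (r r' : Γ →* Spin7) (hr : ∀ γ : Γ, memN e (r γ)) :
    (∃ u : Spin7, memN e u ∧ ∀ γ : Γ, u * r γ * u⁻¹ = r' γ) ↔
      ((∃ g : Spin7, ∀ γ : Γ, g * r γ * g⁻¹ = r' γ) ∧
        ∀ γ : Γ,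
          ((r γ : Spin7) : CliffordAlgebra Q7) * CliffordAlgebra.ι Q7 e *
              (((r γ)⁻¹ : Spin7) : CliffordAlgebra Q7) =
            ((r' γ : Spin7) : CliffordAlgebra Q7) * CliffordAlgebra.ι Q7 e *
              (((r' γ)⁻¹ : Spin7) : CliffordAlgebra Q7)) := by
  simp only [← spinConj_apply]
  constructor
  · rintro ⟨u, hu, hconj⟩
    refine ⟨⟨u, hconj⟩, fun γ => ?_⟩
    obtain ⟨s, hs, hus⟩ := exists_sign_of_memN hu
    obtain ⟨t, -, hrt⟩ := exists_sign_of_memN (hr γ)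
    rw [← hconj γ, spinConj_conj_apply_of_eq_smul hs hus hrt, hrt]
  · rintro ⟨⟨g, hg⟩, hκ⟩
    obtain ⟨w, hw, hcomm⟩ :=
      exists_commute_mul_spinConj_ι_eq_or_eq_neg Q7_posDef (by rwa [Q7_apply]) g
    refine ⟨w * g, hw, fun γ => ?_⟩
    obtain ⟨t, ht, hrt⟩ := exists_sign_of_memN (hr γ)
    have hwr' : Commute (r' γ) w := hcomm (r' γ) t ht (hκ γ ▸ hrt) <| by
      rw [← hg γ, ← AlgEquiv.mul_apply, ← map_mul, inv_mul_cancel_right, map_mul,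
        AlgEquiv.mul_apply, hrt, map_smul]
    calc w * g * r γ * (w * g)⁻¹ = w * (g * r γ * g⁻¹) * w⁻¹ := by group
      _ = r' γ := by rw [hg γ]; exact hwr'.symm.mul_inv_cancel

/-- For homomorphisms `r, r' : Γ →* Spin(7)` with image in the `Spin(1,6)`-subgroup `N`
attached to a unit vector `e`, conjugacy under `N` is equivalent to conjugacy under
`Spin(7)` together with equality of the sign characters `κ∘r` and `κ∘r'`. -/
theorem conjugate_in_N_iff
    {Γ : Type*} [Group Γ] (e : Fin 7 → ℝ) (he : ∑ i, (e i) ^ 2 = 1)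
    (r r' : Γ →* Spin7) (hr : ∀ γ : Γ, memN e (r γ)) (hr' : ∀ γ : Γ, memN e (r' γ)) :
    (∃ u : Spin7, memN e u ∧ ∀ γ : Γ, u * r γ * u⁻¹ = r' γ) ↔
      ((∃ g : Spin7, ∀ γ : Γ, g * r γ * g⁻¹ = r' γ) ∧
        ∀ γ : Γ,
          ((r γ : Spin7) : CliffordAlgebra Q7) * CliffordAlgebra.ι Q7 e *
              (((r γ)⁻¹ : Spin7) : CliffordAlgebra Q7) =
            ((r' γ : Spin7) : CliffordAlgebra Q7) * CliffordAlgebra.ι Q7 e *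
              (((r' γ)⁻¹ : Spin7) : CliffordAlgebra Q7)) :=
  conjugate_in_N_iff_general e he r r' hr
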